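/- arXiv:1604.06535 — 3 statements merged into one kernel-verified Lean document; each statement's English description precedes it below -/
import Mathlib

section
/- For any α > 0 and κ > 0 there exists a constant C₁ > α/μ + κ/p such that for all sufficiently small ε > 0 the following holds: |Y(C₁|log ε|, ξ) − 1| ≤ ε^κ for all ξ ∈ [ε^α, 2C₀], and |Y(C₁|log ε|, ξ) + 1| ≤ ε^κ for all ξ ∈ [−2C₀, −ε^α]. Moreover C₁ can be chosen depending only on α, κ and f. -/
/-!
Comparison with explicit barriers. Choose `c > 0` with `c u (1 - u) < f u` on `(0, 1)` (from
`f' 0 > 0`, `f' 1 < 0` and compactness) and `f u < -c (u - 1)` for `u > 1`. A solution starting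
at `ξ > 0` then stays above the logistic curve `(1 + M e^{-ct})⁻¹` and below `1 + M e^{-ct}`
as soon as `ξ⁻¹ ≤ M` and `ξ ≤ 1 + M`, so `|Y(t, ξ) - 1| ≤ M e^{-ct}`. With `M = 2 C₀ ε^{-α}` and
`c t ≥ (α + κ + 1) |log ε|` this is at most `ε^κ`; oddness of `f` handles negative data.
-/

open Set Filter Topology Real

theorem HasDerivAt.eventually_nhdsGT_mul_sub_lt {f : ℝ → ℝ} {f' r x : ℝ} (hf : HasDerivAt f f' x)
    (hr : r < f') : ∀ᶠ z in 𝓝[>] x, r * (z - x) < f z - f x := by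
  filter_upwards [(hasDerivAt_iff_tendsto_slope_left_right.1 hf).2.eventually
    (eventually_gt_nhds hr), self_mem_nhdsWithin] with z hz hxz
  rw [slope_def_field, lt_div_iff₀ (sub_pos.2 hxz)] at hz
  exact hz

theorem HasDerivAt.eventually_nhdsLT_mul_sub_lt {f : ℝ → ℝ} {f' r x : ℝ} (hf : HasDerivAt f f' x)
    (hr : f' < r) : ∀ᶠ z in 𝓝[<] x, r * (z - x) < f z - f x := by
  filter_upwards [(hasDerivAt_iff_tendsto_slope_left_right.1 hf).1.eventually
    (eventually_lt_nhds hr), self_mem_nhdsWithin] with z hz hzx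
  rw [slope_def_field, div_lt_iff_of_neg (sub_neg.2 hzx)] at hz
  exact hz

theorem IsPreconnected.pos_of_ne_zero {s : Set ℝ} {f : ℝ → ℝ} {l : Filter ℝ} [l.NeBot]
    (hs : IsPreconnected s) (hf : ContinuousOn f s) (hne : ∀ u ∈ s, f u ≠ 0) (hl : l ≤ 𝓟 s)
    (hpos : ∀ᶠ u in l, 0 < f u) : ∀ u ∈ s, 0 < f u := by
  intro u hu
  by_contra! hu0
  obtain ⟨x, hx, hfx⟩ := hs.intermediate_value₂_eventually₁ hu hl hf continuousOn_const hu0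
    (hpos.mono fun _ h => h.le)
  exact hne x hx hfx

theorem exists_mul_mul_one_sub_lt {f : ℝ → ℝ} {a b : ℝ} (hf : ContinuousOn f (Ioo 0 1))
    (hne : ∀ u ∈ Ioo (0 : ℝ) 1, f u ≠ 0) (hf0 : f 0 = 0) (hf1 : f 1 = 0)
    (ha : HasDerivAt f a 0) (ha0 : 0 < a) (hb : HasDerivAt f b 1) (hb0 : b < 0) :
    ∃ c > 0, ∀ u ∈ Ioo (0 : ℝ) 1, c * (u * (1 - u)) < f u := by
  have near0 : ∀ᶠ u in 𝓝[>] 0, a / 2 * u < f u := by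
    simpa [hf0] using ha.eventually_nhdsGT_mul_sub_lt (half_lt_self ha0)
  have near1 : ∀ᶠ u in 𝓝[<] 1, b / 2 * (u - 1) < f u := by
    simpa [hf1] using hb.eventually_nhdsLT_mul_sub_lt (by linarith : b < b / 2)
  have hpos : ∀ u ∈ Ioo (0 : ℝ) 1, 0 < f u :=
    isPreconnected_Ioo.pos_of_ne_zero hf hne (le_principal_iff.2 (Ioo_mem_nhdsGT one_pos))
      (near0.and self_mem_nhdsWithin |>.mono fun u ⟨h, hu⟩ => (mul_pos (half_pos ha0) hu).trans h)
  obtain ⟨r, hr, hr0⟩ := mem_nhdsGT_iff_exists_Ioo_subset.1 near0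
  obtain ⟨l, hl, hl1⟩ := mem_nhdsLT_iff_exists_Ioo_subset.1 near1
  obtain ⟨m, hm, hmid⟩ : ∃ m > 0, ∀ u ∈ Icc r l, m ≤ f u :=
    isCompact_Icc.exists_forall_le' (hf.mono (Icc_subset_Ioo hr hl))
      fun u hu => hpos u (Icc_subset_Ioo hr hl hu)
  obtain ⟨c, hc, hca, hcb, hcm⟩ : ∃ c > 0, c ≤ a / 2 ∧ c ≤ -(b / 2) ∧ c ≤ m :=
    ⟨min (min (a / 2) (-(b / 2))) m, lt_min (lt_min (half_pos ha0) (by linarith)) hm,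
      (min_le_left _ _).trans (min_le_left _ _), (min_le_left _ _).trans (min_le_right _ _),
      min_le_right _ _⟩
  refine ⟨c, hc, fun u ⟨hu0, hu1⟩ => ?_⟩
  have hw : 0 < u * (1 - u) := mul_pos hu0 (by linarith)
  rcases lt_or_ge u r with hur | hru
  · calc c * (u * (1 - u)) ≤ a / 2 * (u * (1 - u)) := by gcongr
      _ ≤ a / 2 * u := by nlinarith [mul_pos (mul_pos ha0 hu0) hu0]
      _ < f u := hr0 ⟨hu0, hur⟩
  rcases le_or_gt u l with hul | hlu
  · calc c * (u * (1 - u)) < c := mul_lt_of_lt_one_right hc (by nlinarith)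
      _ ≤ m := hcm
      _ ≤ f u := hmid u ⟨hru, hul⟩
  · calc c * (u * (1 - u)) ≤ -(b / 2) * (u * (1 - u)) := by gcongr
      _ ≤ b / 2 * (u - 1) := by
        nlinarith [mul_pos (mul_pos (neg_pos.2 hb0) (sub_pos.2 hu1)) (sub_pos.2 hu1)]
      _ < f u := hl1 ⟨hlu, hu1⟩

theorem exists_pos_mul_lt_on_Ioo_and_lt_on_Ioi {f : ℝ → ℝ} {p μ : ℝ}
    (hf : ContinuousOn f (Ioo 0 1)) (hne : ∀ u ∈ Ioo (0 : ℝ) 1, f u ≠ 0) (hf0 : f 0 = 0)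
    (hf1 : f 1 = 0) (h0 : HasDerivAt f μ 0) (hμ : 0 < μ) (h1 : HasDerivAt f (-p) 1) (hp : 0 < p)
    (hf_lin : ∀ u, 1 < u → f u ≤ -p * (u - 1)) :
    ∃ c > 0, (∀ u ∈ Ioo (0 : ℝ) 1, c * (u * (1 - u)) < f u) ∧
      ∀ u, 1 < u → f u < -(c * (u - 1)) := by
  obtain ⟨c₀, hc₀, hlow⟩ := exists_mul_mul_one_sub_lt hf hne hf0 hf1 h0 hμ h1 (neg_neg_of_pos hp)
  refine ⟨min c₀ (p / 2), lt_min hc₀ (half_pos hp), fun u hu => ?_, fun u hu => ?_⟩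
  · exact (mul_le_mul_of_nonneg_right (min_le_left _ _) (mul_pos hu.1 (sub_pos.2 hu.2)).le).trans_lt
      (hlow u hu)
  · nlinarith [hf_lin u hu, min_le_right c₀ (p / 2)]

theorem le_of_hasDerivAt_of_eq_imp_lt {u v u' v' : ℝ → ℝ} {a : ℝ}
    (hu : ∀ t, a ≤ t → HasDerivAt u (u' t) t) (hv : ∀ t, a ≤ t → HasDerivAt v (v' t) t)
    (ha : u a ≤ v a) (h : ∀ t, a ≤ t → u t = v t → u' t < v' t) : ∀ t, a ≤ t → u t ≤ v t :=
  fun _ ht => image_le_of_deriv_right_lt_deriv_boundary'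
    (fun x hx => (hu x hx.1).continuousAt.continuousWithinAt)
    (fun x hx => (hu x hx.1).hasDerivWithinAt) ha
    (fun x hx => (hv x hx.1).continuousAt.continuousWithinAt)
    (fun x hx => (hv x hx.1).hasDerivWithinAt) (fun x hx => h x hx.1) ⟨ht, le_rfl⟩

/-- The solution of `v' = c v (1 - v)` with `v 0 = (1 + M)⁻¹`. -/
noncomputable def logistic (c M t : ℝ) : ℝ := (1 + M * exp (-c * t))⁻¹

theorem hasDerivAt_one_add_mul_exp (c M t : ℝ) :
    HasDerivAt (fun s => 1 + M * exp (-c * s)) (-c * (M * exp (-c * t))) t :=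
  (((hasDerivAt_id' t).const_mul (-c)).exp.const_mul M).const_add 1 |>.congr_deriv (by ring)

section Logistic

variable {c M : ℝ}

theorem logistic_pos (hM : 0 ≤ M) (t : ℝ) : 0 < logistic c M t := by
  unfold logistic; positivity

theorem logistic_lt_one (hM : 0 < M) (t : ℝ) : logistic c M t < 1 :=
  inv_lt_one_of_one_lt₀ (lt_add_of_pos_right 1 (by positivity))

theorem one_sub_logistic_le (hM : 0 ≤ M) (t : ℝ) : 1 - logistic c M t ≤ M * exp (-c * t) := by
  have hD : 0 < 1 + M * exp (-c * t) := by positivity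
  rw [logistic, ← one_div, sub_le_comm, le_div_iff₀ hD]
  nlinarith [sq_nonneg (M * exp (-c * t))]

theorem hasDerivAt_logistic (hM : 0 ≤ M) (t : ℝ) :
    HasDerivAt (logistic c M) (c * (logistic c M t * (1 - logistic c M t))) t := by
  have hD : 1 + M * exp (-c * t) ≠ 0 := by positivity
  refine ((hasDerivAt_one_add_mul_exp c M t).inv hD).congr_deriv ?_
  simp only [logistic]
  field_simp
  ring

end Logistic

section Flow

variable {f g : ℝ → ℝ} {c M : ℝ}

theorem one_sub_mul_exp_le_of_hasDerivAt (hg : ∀ t, 0 ≤ t → HasDerivAt g (f (g t)) t)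
    (hf : ∀ u ∈ Ioo (0 : ℝ) 1, c * (u * (1 - u)) < f u)
    (hM : 0 < M) (h0 : (1 + M)⁻¹ ≤ g 0) (t : ℝ) (ht : 0 ≤ t) :
    1 - M * exp (-c * t) ≤ g t := by
  have hv : logistic c M t ≤ g t := by
    refine le_of_hasDerivAt_of_eq_imp_lt (fun s _ => hasDerivAt_logistic hM.le s) hg
      (by simpa [logistic] using h0) (fun s _ hs => ?_) t ht
    rw [← hs]
    exact hf _ ⟨logistic_pos hM.le s, logistic_lt_one hM s⟩
  linarith [one_sub_logistic_le (c := c) hM.le t]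

theorem le_one_add_mul_exp_of_hasDerivAt (hg : ∀ t, 0 ≤ t → HasDerivAt g (f (g t)) t)
    (hf : ∀ u, 1 < u → f u < -(c * (u - 1)))
    (hM : 0 < M) (h0 : g 0 ≤ 1 + M) (t : ℝ) (ht : 0 ≤ t) :
    g t ≤ 1 + M * exp (-c * t) := by
  refine le_of_hasDerivAt_of_eq_imp_lt hg (fun s _ => hasDerivAt_one_add_mul_exp c M s)
    (by simpa using h0) (fun s _ hs => ?_) t ht
  rw [hs]
  have := hf _ (lt_add_of_pos_right 1 (by positivity : 0 < M * exp (-c * s)))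
  linarith

theorem abs_sub_one_le_mul_exp_of_hasDerivAt (hg : ∀ t, 0 ≤ t → HasDerivAt g (f (g t)) t)
    (hlow : ∀ u ∈ Ioo (0 : ℝ) 1, c * (u * (1 - u)) < f u)
    (hup : ∀ u, 1 < u → f u < -(c * (u - 1))) (hg0 : 0 < g 0) (hM : (g 0)⁻¹ ≤ M)
    (hM' : g 0 ≤ 1 + M) (t : ℝ) (ht : 0 ≤ t) : |g t - 1| ≤ M * exp (-c * t) := by
  have hMpos : 0 < M := (inv_pos.2 hg0).trans_le hM
  have h0 : (1 + M)⁻¹ ≤ g 0 := by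
    rw [inv_le_comm₀ (by positivity) hg0]; linarith
  rw [abs_le]
  constructor
  · linarith [one_sub_mul_exp_le_of_hasDerivAt hg hlow hMpos h0 t ht]
  · linarith [le_one_add_mul_exp_of_hasDerivAt hg hup hMpos hM' t ht]

end Flow

theorem mul_rpow_neg_mul_exp_le {ε α κ c C₁ A : ℝ} (hε : 0 < ε) (hε1 : ε ≤ 1) (hA : 0 ≤ A)
    (hAε : A * ε ≤ 1) (hC₁ : α + κ + 1 ≤ c * C₁) :
    A * ε ^ (-α) * exp (-c * (C₁ * |log ε|)) ≤ ε ^ κ := by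
  have hexp : exp (-c * (C₁ * |log ε|)) = ε ^ (c * C₁) := by
    rw [abs_of_nonpos (log_nonpos hε.le hε1), rpow_def_of_pos hε]
    ring_nf
  calc A * ε ^ (-α) * exp (-c * (C₁ * |log ε|))
      = A * ε ^ (-α) * ε ^ (c * C₁) := by rw [hexp]
    _ ≤ A * ε ^ (-α) * ε ^ (α + κ + 1) :=
      mul_le_mul_of_nonneg_left (rpow_le_rpow_of_exponent_ge hε hε1 hC₁) (by positivity)
    _ = A * ε * ε ^ κ := by
      rw [mul_assoc A, ← rpow_add hε, show -α + (α + κ + 1) = κ + 1 by ring, rpow_add_one hε.ne']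
      ring
    _ ≤ ε ^ κ := mul_le_of_le_one_left (rpow_nonneg hε.le κ) hAε

theorem abs_sub_one_le_rpow_of_hasDerivAt {f g : ℝ → ℝ} {c ε α κ A C₁ : ℝ}
    (hg : ∀ t, 0 ≤ t → HasDerivAt g (f (g t)) t)
    (hlow : ∀ u ∈ Ioo (0 : ℝ) 1, c * (u * (1 - u)) < f u)
    (hup : ∀ u, 1 < u → f u < -(c * (u - 1))) (hε : 0 < ε) (hα : 0 ≤ α) (hA : 1 ≤ A)
    (hAε : A * ε ≤ 1) (hC₁ : 0 ≤ C₁) (hcC₁ : α + κ + 1 ≤ c * C₁) (h0 : ε ^ α ≤ g 0)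
    (h0' : g 0 ≤ A) : |g (C₁ * |log ε|) - 1| ≤ ε ^ κ := by
  have hε1 : ε ≤ 1 := by nlinarith
  have hεα : 1 ≤ ε ^ (-α) := one_le_rpow_of_pos_of_le_one_of_nonpos hε hε1 (by linarith)
  have hg0 : 0 < g 0 := (rpow_pos_of_pos hε α).trans_le h0
  refine (abs_sub_one_le_mul_exp_of_hasDerivAt (M := A * ε ^ (-α)) hg hlow hup hg0 ?_ ?_ _
    (by positivity)).trans (mul_rpow_neg_mul_exp_le hε hε1 (by linarith) hAε hcC₁)
  · calc (g 0)⁻¹ ≤ (ε ^ α)⁻¹ := inv_anti₀ (rpow_pos_of_pos hε α) h0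
      _ = ε ^ (-α) := (rpow_neg hε.le α).symm
      _ ≤ A * ε ^ (-α) := le_mul_of_one_le_left (by linarith) hA
  · nlinarith

theorem stmt_0_general
    (f : ℝ → ℝ) (p μ C₀ : ℝ)
    (hf : ContDiff ℝ 2 f)
    (hp : 0 < p) (hμ : 0 < μ) (hC₀ : 1 < C₀)
    (hzeros : ∀ u : ℝ, f u = 0 ↔ u = -1 ∨ u = 0 ∨ u = 1)
    (hf'1 : deriv f 1 = -p)
    (hf'0 : deriv f 0 = μ)
    (hodd : ∀ u : ℝ, f (-u) = -f u)
    (hf_lin : ∀ u : ℝ, 1 ≤ u → f u ≤ -p * (u - 1))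
    (Y : ℝ → ℝ → ℝ)
    (hY0 : ∀ ξ : ℝ, Y 0 ξ = ξ)
    (hYode : ∀ ξ : ℝ, ∀ τ : ℝ, 0 ≤ τ → HasDerivAt (fun t => Y t ξ) (f (Y τ ξ)) τ)
    (α κ : ℝ) (hα : 0 < α) (hκ : 0 < κ) :
    ∃ C₁ : ℝ, α / μ + κ / p < C₁ ∧
      ∃ ε₀ : ℝ, 0 < ε₀ ∧ ∀ ε : ℝ, 0 < ε → ε < ε₀ →
        (∀ ξ : ℝ, ε ^ α ≤ ξ → ξ ≤ 2 * C₀ →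
          |Y (C₁ * |Real.log ε|) ξ - 1| ≤ ε ^ κ) ∧
        (∀ ξ : ℝ, -(2 * C₀) ≤ ξ → ξ ≤ -(ε ^ α) →
          |Y (C₁ * |Real.log ε|) ξ + 1| ≤ ε ^ κ) := by
  have hdiff : Differentiable ℝ f := hf.differentiable (by norm_num)
  obtain ⟨c, hc, hlow, hup⟩ := exists_pos_mul_lt_on_Ioo_and_lt_on_Ioi hf.continuous.continuousOn
    (fun u ⟨hu0, hu1⟩ hu => by rcases (hzeros u).1 hu with h | h | h <;> linarith)
    ((hzeros 0).2 (by norm_num)) ((hzeros 1).2 (by norm_num)) (hf'0 ▸ (hdiff 0).hasDerivAt) hμ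
    (hf'1 ▸ (hdiff 1).hasDerivAt) hp fun u hu => hf_lin u hu.le
  refine ⟨α / μ + κ / p + (α + κ + 1) / c, by linarith [div_pos (by linarith : 0 < α + κ + 1) hc],
    1 / (2 * C₀), by positivity, fun ε hε hεC₀ => ?_⟩
  have hC₁ : α + κ + 1 ≤ c * (α / μ + κ / p + (α + κ + 1) / c) := by
    rw [mul_add, mul_div_cancel₀ _ hc.ne']
    nlinarith [div_pos hα hμ, div_pos hκ hp]
  have hflow := fun g hg => abs_sub_one_le_rpow_of_hasDerivAt (g := g) hg hlow hup hε hα.le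
    (by linarith : 1 ≤ 2 * C₀) ((lt_div_iff₀' (by linarith)).1 hεC₀).le (by positivity) hC₁
  constructor
  · intro ξ h1 h2
    exact hflow _ (hYode ξ) (by rwa [hY0]) (by rwa [hY0])
  · intro ξ h1 h2
    have hneg : ∀ t, 0 ≤ t → HasDerivAt (fun t => -Y t ξ) (f (-Y t ξ)) t := fun t ht => by
      rw [hodd]; exact (hYode ξ t ht).neg
    rw [← abs_neg]
    convert hflow _ hneg (by rw [hY0]; linarith) (by rw [hY0]; linarith) using 2
    ring

/-- Proposition 3.2 (generation estimate for the ODE flow): for any `α > 0` and `κ > 0`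
there exists `C₁ > α/μ + κ/p` such that for all sufficiently small `ε > 0`,
`|Y(C₁|log ε|, ξ) − 1| ≤ ε^κ` for all `ξ ∈ [ε^α, 2C₀]` and
`|Y(C₁|log ε|, ξ) + 1| ≤ ε^κ` for all `ξ ∈ [−2C₀, −ε^α]`. -/
theorem stmt_0
    (f : ℝ → ℝ) (p μ C₀ : ℝ)
    (hf : ContDiff ℝ 2 f)
    (hp : 0 < p) (hμ : 0 < μ) (hC₀ : 1 < C₀)
    (hzeros : ∀ u : ℝ, f u = 0 ↔ u = -1 ∨ u = 0 ∨ u = 1)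
    (hf'1 : deriv f 1 = -p) (hf'm1 : deriv f (-1) = -p)
    (hf'0 : deriv f 0 = μ)
    (hodd : ∀ u : ℝ, f (-u) = -f u)
    (hf_lin : ∀ u : ℝ, 1 ≤ u → f u ≤ -p * (u - 1))
    (Y : ℝ → ℝ → ℝ)
    (hY0 : ∀ ξ : ℝ, Y 0 ξ = ξ)
    (hYode : ∀ ξ : ℝ, ∀ τ : ℝ, 0 ≤ τ → HasDerivAt (fun t => Y t ξ) (f (Y τ ξ)) τ)
    (α κ : ℝ) (hα : 0 < α) (hκ : 0 < κ) :
    ∃ C₁ : ℝ, α / μ + κ / p < C₁ ∧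
      ∃ ε₀ : ℝ, 0 < ε₀ ∧ ∀ ε : ℝ, 0 < ε → ε < ε₀ →
        (∀ ξ : ℝ, ε ^ α ≤ ξ → ξ ≤ 2 * C₀ →
          |Y (C₁ * |Real.log ε|) ξ - 1| ≤ ε ^ κ) ∧
        (∀ ξ : ℝ, -(2 * C₀) ≤ ξ → ξ ≤ -(ε ^ α) →
          |Y (C₁ * |Real.log ε|) ξ + 1| ≤ ε ^ κ) :=
  stmt_0_general f p μ C₀ hf hp hμ hC₀ hzeros hf'1 hf'0 hodd hf_lin Y hY0 hYode α κ hα hκ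
end

section
/- For all α > 0, β > 0 and δ ≥ 2αC_f/μ, there exists a constant C > 0 such that for all sufficiently small ε > 0: if ξ ∈ [ε^α, 2C₀ − ε^{β+δ}], then Y(τ, ξ + ε^{β+δ}) − Y(τ, ξ) ≤ ε^β for all τ ∈ [0, C|log ε|]. -/
/-!
The interval `[-2C₀, 2C₀]` is invariant under the flow, since `f` points inward at its endpoints
(`f u ≤ -p (u - 1) < 0` for `u ≥ 2C₀`, and `f` is odd). On it `f` is `K`-Lipschitz, so by Grönwall
two trajectories separate at most like `e^{K τ}`: for `τ ≤ (δ / K) |log ε|` the initial gap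
`ε^{β+δ}` is amplified by at most `ε^{-δ}`. Here `δ > 0` because `C_f ≥ f'(0) = μ > 0`.
-/

open Set Real
open scoped NNReal

theorem le_of_hasDerivAt_of_neg_on_Ici {v g : ℝ → ℝ} {b : ℝ}
    (hg : ∀ t, 0 ≤ t → HasDerivAt g (v (g t)) t) (hv : ∀ u, b ≤ u → v u < 0) (h0 : g 0 ≤ b)
    {t : ℝ} (ht : 0 ≤ t) : g t ≤ b :=
  image_le_of_deriv_right_lt_deriv_boundary (B := fun _ => b) (B' := fun _ => 0)
    (fun s hs => (hg s hs.1).continuousAt.continuousWithinAt)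
    (fun s hs => (hg s hs.1).hasDerivWithinAt) h0 (fun _ => hasDerivAt_const _ _)
    (fun _ _ hs => hv _ hs.ge) ⟨ht, le_rfl⟩

theorem mem_Icc_of_hasDerivAt_of_inward {v g : ℝ → ℝ} {a b : ℝ}
    (hg : ∀ t, 0 ≤ t → HasDerivAt g (v (g t)) t)
    (hva : ∀ u, u ≤ a → 0 < v u) (hvb : ∀ u, b ≤ u → v u < 0) (h0 : g 0 ∈ Icc a b)
    {t : ℝ} (ht : 0 ≤ t) : g t ∈ Icc a b := by
  refine ⟨?_, le_of_hasDerivAt_of_neg_on_Ici hg hvb h0.2 ht⟩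
  have := le_of_hasDerivAt_of_neg_on_Ici (v := fun u => -v (-u)) (g := fun t => -g t) (b := -a)
    (fun s hs => (hg s hs).neg.congr_deriv (by rw [neg_neg]))
    (fun u hu => by linarith [hva (-u) (by linarith)]) (by linarith [h0.1]) ht
  linarith

theorem abs_sub_le_mul_exp_of_lipschitzOnWith {v g₁ g₂ : ℝ → ℝ} {s : Set ℝ} {K : ℝ≥0}
    (hv : LipschitzOnWith K v s)
    (hg₁ : ∀ t, 0 ≤ t → HasDerivAt g₁ (v (g₁ t)) t) (hg₂ : ∀ t, 0 ≤ t → HasDerivAt g₂ (v (g₂ t)) t)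
    (hs₁ : ∀ t, 0 ≤ t → g₁ t ∈ s) (hs₂ : ∀ t, 0 ≤ t → g₂ t ∈ s) {t : ℝ} (ht : 0 ≤ t) :
    |g₂ t - g₁ t| ≤ |g₂ 0 - g₁ 0| * exp (K * t) := by
  simpa [Real.dist_eq] using dist_le_of_trajectories_ODE_of_mem (v := fun _ => v) (s := fun _ => s)
    (fun _ _ => hv)
    (fun t ht => (hg₂ t ht.1).continuousAt.continuousWithinAt)
    (fun t ht => (hg₂ t ht.1).hasDerivWithinAt) (fun t ht => hs₂ t ht.1)
    (fun t ht => (hg₁ t ht.1).continuousAt.continuousWithinAt)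
    (fun t ht => (hg₁ t ht.1).hasDerivWithinAt) (fun t ht => hs₁ t ht.1)
    le_rfl t ⟨ht, le_rfl⟩

theorem rpow_add_mul_exp_mul_abs_log {ε : ℝ} (hε₀ : 0 < ε) (hε₁ : ε ≤ 1) (β δ : ℝ) {K : ℝ}
    (hK : K ≠ 0) : ε ^ (β + δ) * exp (K * (δ / K * |log ε|)) = ε ^ β := by
  calc ε ^ (β + δ) * exp (K * (δ / K * |log ε|)) = ε ^ (β + δ) * ε ^ (-δ) := by
        rw [abs_of_nonpos (log_nonpos hε₀.le hε₁), rpow_def_of_pos hε₀ (-δ)]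
        congr 2
        field_simp
    _ = ε ^ β := by rw [← rpow_add hε₀, add_neg_cancel_right]

theorem stmt_1_general
    (f : ℝ → ℝ) (p μ C₀ Cf : ℝ)
    (hf : ContDiff ℝ 2 f)
    (hp : 0 < p) (hμ : 0 < μ) (hC₀ : 1 < C₀)
    (hf'0 : deriv f 0 = μ)
    (hodd : ∀ u : ℝ, f (-u) = -f u)
    (hf_lin : ∀ u : ℝ, 1 ≤ u → f u ≤ -p * (u - 1))
    (hCf : IsLUB (deriv f '' Set.Icc (-(2 * C₀)) (2 * C₀)) Cf)
    (Y : ℝ → ℝ → ℝ)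
    (hY0 : ∀ ξ : ℝ, Y 0 ξ = ξ)
    (hYode : ∀ ξ : ℝ, ∀ τ : ℝ, 0 ≤ τ → HasDerivAt (fun t => Y t ξ) (f (Y τ ξ)) τ)
    (α β δ : ℝ) (hα : 0 < α) (hδ : 2 * α * Cf / μ ≤ δ) :
    ∃ C : ℝ, 0 < C ∧
      ∃ ε₀ : ℝ, 0 < ε₀ ∧ ∀ ε : ℝ, 0 < ε → ε < ε₀ →
        ∀ ξ : ℝ, ε ^ α ≤ ξ → ξ ≤ 2 * C₀ - ε ^ (β + δ) →
          ∀ τ : ℝ, 0 ≤ τ → τ ≤ C * |Real.log ε| →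
            Y τ (ξ + ε ^ (β + δ)) - Y τ ξ ≤ ε ^ β := by
  set b := 2 * C₀
  have hδ_pos : 0 < δ := by
    have hCf_pos : 0 < Cf := hμ.trans_le (hCf.1 ⟨0, ⟨by linarith, by linarith⟩, hf'0⟩)
    exact (by positivity : 0 < 2 * α * Cf / μ).trans_le hδ
  have hf_neg : ∀ u, b ≤ u → f u < 0 := fun u hu => by nlinarith [hf_lin u (by linarith)]
  have hf_pos : ∀ u, u ≤ -b → 0 < f u := fun u hu => by
    linarith [hodd u, hf_neg (-u) (by linarith)]
  have hY_mem : ∀ ξ ∈ Icc (-b) b, ∀ t, 0 ≤ t → Y t ξ ∈ Icc (-b) b := fun ξ hξ t ht =>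
    mem_Icc_of_hasDerivAt_of_inward (hYode ξ) hf_pos hf_neg (by rwa [hY0]) ht
  obtain ⟨K, hK⟩ :=
    hf.contDiffOn.exists_lipschitzOnWith (by norm_num) (convex_Icc (-b) b) isCompact_Icc
  have hK₁ : LipschitzOnWith (K + 1) f (Icc (-b) b) := hK.weaken le_self_add
  have hK_pos : (0 : ℝ) < ↑(K + 1) := by push_cast; positivity
  refine ⟨δ / ↑(K + 1), div_pos hδ_pos hK_pos, 1, one_pos, ?_⟩
  intro ε hε₀ hε₁ ξ hξ₁ hξ₂ τ hτ₀ hτ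
  have hgap := rpow_pos_of_pos hε₀ (β + δ)
  have hξ₀ := rpow_pos_of_pos hε₀ α
  have hgrowth := abs_sub_le_mul_exp_of_lipschitzOnWith hK₁
    (hYode ξ) (hYode (ξ + ε ^ (β + δ))) (hY_mem ξ ⟨by linarith, by linarith⟩)
    (hY_mem _ ⟨by linarith, by linarith⟩) hτ₀
  rw [hY0, hY0, add_sub_cancel_left, abs_of_pos hgap] at hgrowth
  calc Y τ (ξ + ε ^ (β + δ)) - Y τ ξ
      ≤ ε ^ (β + δ) * exp (↑(K + 1) * τ) := (le_abs_self _).trans hgrowth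
    _ ≤ ε ^ (β + δ) * exp (↑(K + 1) * (δ / ↑(K + 1) * |log ε|)) := by gcongr
    _ = ε ^ β := rpow_add_mul_exp_mul_abs_log hε₀ hε₁.le β δ hK_pos.ne'

/-- Corollary 3.1 (i): for all `α > 0`, `β > 0` and `δ ≥ 2αC_f/μ` there exists `C > 0`
such that for all sufficiently small `ε > 0`, if `ξ ∈ [ε^α, 2C₀ − ε^{β+δ}]` then
`Y(τ, ξ + ε^{β+δ}) − Y(τ, ξ) ≤ ε^β` for all `τ ∈ [0, C|log ε|]`. -/
theorem stmt_1
    (f : ℝ → ℝ) (p μ C₀ Cf : ℝ)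
    (hf : ContDiff ℝ 2 f)
    (hp : 0 < p) (hμ : 0 < μ) (hC₀ : 1 < C₀)
    (hzeros : ∀ u : ℝ, f u = 0 ↔ u = -1 ∨ u = 0 ∨ u = 1)
    (hf'1 : deriv f 1 = -p) (hf'm1 : deriv f (-1) = -p)
    (hf'0 : deriv f 0 = μ)
    (hodd : ∀ u : ℝ, f (-u) = -f u)
    (hf_lin : ∀ u : ℝ, 1 ≤ u → f u ≤ -p * (u - 1))
    (hCf : IsLUB (deriv f '' Set.Icc (-(2 * C₀)) (2 * C₀)) Cf)
    (Y : ℝ → ℝ → ℝ)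
    (hY0 : ∀ ξ : ℝ, Y 0 ξ = ξ)
    (hYode : ∀ ξ : ℝ, ∀ τ : ℝ, 0 ≤ τ → HasDerivAt (fun t => Y t ξ) (f (Y τ ξ)) τ)
    (α β δ : ℝ) (hα : 0 < α) (hβ : 0 < β) (hδ : 2 * α * Cf / μ ≤ δ) :
    ∃ C : ℝ, 0 < C ∧
      ∃ ε₀ : ℝ, 0 < ε₀ ∧ ∀ ε : ℝ, 0 < ε → ε < ε₀ →
        ∀ ξ : ℝ, ε ^ α ≤ ξ → ξ ≤ 2 * C₀ - ε ^ (β + δ) →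
          ∀ τ : ℝ, 0 ≤ τ → τ ≤ C * |Real.log ε| →
            Y τ (ξ + ε ^ (β + δ)) - Y τ ξ ≤ ε ^ β :=
  stmt_1_general f p μ C₀ Cf hf hp hμ hC₀ hf'0 hodd hf_lin hCf Y hY0 hYode α β δ hα hδ
end

section
/- Fix τ ≥ 0, ξ ∈ ℝ and η ≥ 0, and suppose that |f′(Y₁(s,ξ)) − f′(Y₂(s,ξ))| ≤ η for all s ∈ [0,τ]. Then |∂_ξ Y₁(τ,ξ) − ∂_ξ Y₂(τ,ξ)| ≤ ∂_ξ Y₂(τ,ξ) · (e^{ητ} − 1). -/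
/-- If `|f′(Y₁(s,ξ)) − f′(Y₂(s,ξ))| ≤ η` on `[0,τ]`, then
`|∂_ξ Y₁(τ,ξ) − ∂_ξ Y₂(τ,ξ)| ≤ ∂_ξ Y₂(τ,ξ) · (e^{ητ} − 1)`. -/
theorem stmt_7
    (f g₁ g₂ : ℝ → ℝ)
    (hf : ContDiff ℝ 1 f)
    (hg₁ : ContinuousOn g₁ (Set.Ici 0)) (hg₂ : ContinuousOn g₂ (Set.Ici 0))
    (Y₁ Y₂ Yξ₁ Yξ₂ : ℝ → ℝ → ℝ)
    (hY₁0 : ∀ ξ : ℝ, Y₁ 0 ξ = ξ) (hY₂0 : ∀ ξ : ℝ, Y₂ 0 ξ = ξ)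
    (hY₁ode : ∀ ξ : ℝ, ∀ τ : ℝ, 0 ≤ τ →
      HasDerivAt (fun t => Y₁ t ξ) (f (Y₁ τ ξ) + g₁ τ) τ)
    (hY₂ode : ∀ ξ : ℝ, ∀ τ : ℝ, 0 ≤ τ →
      HasDerivAt (fun t => Y₂ t ξ) (f (Y₂ τ ξ) + g₂ τ) τ)
    (hvar₁ : ∀ τ : ℝ, 0 ≤ τ → ∀ ξ : ℝ,
      Yξ₁ τ ξ = Real.exp (∫ s in (0:ℝ)..τ, deriv f (Y₁ s ξ)))
    (hvar₂ : ∀ τ : ℝ, 0 ≤ τ → ∀ ξ : ℝ,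
      Yξ₂ τ ξ = Real.exp (∫ s in (0:ℝ)..τ, deriv f (Y₂ s ξ)))
    (τ : ℝ) (hτ : 0 ≤ τ) (ξ η : ℝ) (hη : 0 ≤ η)
    (hclose : ∀ s : ℝ, s ∈ Set.Icc 0 τ →
      |deriv f (Y₁ s ξ) - deriv f (Y₂ s ξ)| ≤ η) :
    |Yξ₁ τ ξ - Yξ₂ τ ξ| ≤ Yξ₂ τ ξ * (Real.exp (η * τ) - 1) := by

  -- abbreviations
  set d₁ : ℝ → ℝ := fun s => deriv f (Y₁ s ξ) with hd₁
  set d₂ : ℝ → ℝ := fun s => deriv f (Y₂ s ξ) with hd₂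
  have hcont_f' : Continuous (deriv f) := (hf.iterate_deriv' 0 1).continuous
  have hcontY₁ : ContinuousOn (fun s => Y₁ s ξ) (Set.Icc 0 τ) := fun s hs =>
    ((hY₁ode ξ s hs.1).continuousAt).continuousWithinAt
  have hcontY₂ : ContinuousOn (fun s => Y₂ s ξ) (Set.Icc 0 τ) := fun s hs =>
    ((hY₂ode ξ s hs.1).continuousAt).continuousWithinAt
  have hc₁ : ContinuousOn d₁ (Set.uIcc 0 τ) := by
    rw [Set.uIcc_of_le hτ]
    exact hcont_f'.comp_continuousOn hcontY₁
  have hc₂ : ContinuousOn d₂ (Set.uIcc 0 τ) := by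
    rw [Set.uIcc_of_le hτ]
    exact hcont_f'.comp_continuousOn hcontY₂
  have hi₁ : IntervalIntegrable d₁ MeasureTheory.volume 0 τ := hc₁.intervalIntegrable
  have hi₂ : IntervalIntegrable d₂ MeasureTheory.volume 0 τ := hc₂.intervalIntegrable
  set I₁ := ∫ s in (0:ℝ)..τ, d₁ s with hI₁
  set I₂ := ∫ s in (0:ℝ)..τ, d₂ s with hI₂
  have hdiff : |I₁ - I₂| ≤ η * τ := by
    rw [hI₁, hI₂, ← intervalIntegral.integral_sub hi₁ hi₂]
    refine (intervalIntegral.abs_integral_le_integral_abs (μ := MeasureTheory.volume)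
      (f := fun s => d₁ s - d₂ s) hτ).trans ?_
    calc (∫ s in (0:ℝ)..τ, |d₁ s - d₂ s|)
        ≤ ∫ s in (0:ℝ)..τ, η := by
          apply intervalIntegral.integral_mono_on hτ _ intervalIntegrable_const
          · intro s hs; exact hclose s hs
          · exact ((hc₁.sub hc₂).abs).intervalIntegrable
      _ = η * τ := by rw [intervalIntegral.integral_const, smul_eq_mul]; ring
  rw [hvar₁ τ hτ ξ, hvar₂ τ hτ ξ]
  have key : Real.exp I₁ - Real.exp I₂ = Real.exp I₂ * (Real.exp (I₁ - I₂) - 1) := by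
    rw [mul_sub, mul_one, ← Real.exp_add]; ring_nf
  rw [key, abs_mul, abs_of_pos (Real.exp_pos I₂)]
  have hexp : |Real.exp (I₁ - I₂) - 1| ≤ Real.exp (η * τ) - 1 := by
    rcases le_or_gt 0 (I₁ - I₂) with h | h
    · rw [abs_of_nonneg (by linarith [Real.one_le_exp h])]
      have : Real.exp (I₁ - I₂) ≤ Real.exp (η * τ) :=
        Real.exp_le_exp.mpr (le_trans (le_abs_self _) hdiff)
      linarith
    · rw [abs_of_nonpos (by linarith [Real.exp_lt_one_iff.mpr h])]
      have h2 : Real.exp (I₂ - I₁) ≤ Real.exp (η * τ) :=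
        Real.exp_le_exp.mpr ((le_abs_self _).trans (by rwa [abs_sub_comm] at hdiff))
      have h3 : (I₁ - I₂) + 1 ≤ Real.exp (I₁ - I₂) := Real.add_one_le_exp _
      have h4 : (I₂ - I₁) + 1 ≤ Real.exp (I₂ - I₁) := Real.add_one_le_exp _
      nlinarith [Real.exp_pos (I₁ - I₂), Real.exp_pos (I₂ - I₁),
        mul_pos (Real.exp_pos (I₁ - I₂)) (Real.exp_pos (I₂ - I₁)),
        Real.exp_add (I₁ - I₂) (I₂ - I₁)]
  exact mul_le_mul_of_nonneg_left hexp (Real.exp_pos I₂).le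
end
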